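/- Let n be a natural number. On triples (A, f, α) with A : ℝ → Matrix (Fin n) (Fin n) ℝ smooth, f : ℝ → (Fin n → ℝ) smooth, and α ∈ ℝ, the bracket [(A,f,α),(B,g,β)]_𝔩 = (AB − BA + βA' − αB', Ag − Bf + βf' − αg', 0) is bilinear, antisymmetric, and satisfies the Jacobi identity: [(A,f,α),[(B,g,β),(C,h,γ)]_𝔩]_𝔩 + [(B,g,β),[(C,h,γ),(A,f,α)]_𝔩]_𝔩 + [(C,h,γ),[(A,f,α),(B,g,β)]_𝔩]_𝔩 = 0. -/

import Mathlib

open Matrix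

attribute [local instance] Matrix.normedAddCommGroup Matrix.normedSpace

/-- The type of triples `(A, f, α)` with `A : ℝ → Matrix (Fin n) (Fin n) ℝ`,
`f : ℝ → (Fin n → ℝ)` and `α ∈ ℝ`, with componentwise (pointwise) vector
space structure. -/
abbrev Triple (n : ℕ) :=
  (ℝ → Matrix (Fin n) (Fin n) ℝ) × (ℝ → (Fin n → ℝ)) × ℝ

/-- A triple is smooth if its two function components are smooth. -/
def Triple.Smooth {n : ℕ} (X : Triple n) : Prop :=
  ContDiff ℝ (⊤ : ℕ∞) X.1 ∧ ContDiff ℝ (⊤ : ℕ∞) X.2.1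

/-- The bracket `[(A,f,α),(B,g,β)]_𝔩 = (AB − BA + βA' − αB', Ag − Bf + βf' − αg', 0)`
on triples, all operations pointwise in `t`. -/
noncomputable def lbracket {n : ℕ} (X Y : Triple n) : Triple n :=
  (fun t => X.1 t * Y.1 t - Y.1 t * X.1 t + Y.2.2 • deriv X.1 t - X.2.2 • deriv Y.1 t,
   fun t => (X.1 t).mulVec (Y.2.1 t) - (Y.1 t).mulVec (X.2.1 t)
              + Y.2.2 • deriv X.2.1 t - X.2.2 • deriv Y.2.1 t,
   0)

section helpers

theorem HasDerivAt.bilin {E F G : Type*} [NormedAddCommGroup E] [NormedSpace ℝ E]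
    [NormedAddCommGroup F] [NormedSpace ℝ F] [NormedAddCommGroup G] [NormedSpace ℝ G]
    (B : E →L[ℝ] F →L[ℝ] G) {f : ℝ → E} {g : ℝ → F} {f' : E} {g' : F} {t : ℝ}
    (hf : HasDerivAt f f' t) (hg : HasDerivAt g g' t) :
    HasDerivAt (fun s => B (f s) (g s)) (B f' (g t) + B (f t) g') t := by
  have h1 : HasDerivAt (fun s => B (f s)) (B f') t := B.hasFDerivAt.comp_hasDerivAt t hf
  exact h1.clm_apply hg

theorem deriv_comb {E : Type*} [NormedAddCommGroup E] [NormedSpace ℝ E]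
    {A B : ℝ → E} (hA : Differentiable ℝ A) (hB : Differentiable ℝ B) (a b t : ℝ) :
    deriv (a • A + b • B) t = a • deriv A t + b • deriv B t := by
  have : HasDerivAt (fun s => a • A s + b • B s) (a • deriv A t + b • deriv B t) t :=
    ((hA t).hasDerivAt.const_smul a).add ((hB t).hasDerivAt.const_smul b)
  exact this.deriv

variable {n : ℕ}

noncomputable def mulL (n : ℕ) :
    Matrix (Fin n) (Fin n) ℝ →L[ℝ] Matrix (Fin n) (Fin n) ℝ →L[ℝ] Matrix (Fin n) (Fin n) ℝ :=
  LinearMap.toContinuousLinearMap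
    { toFun := fun A => LinearMap.toContinuousLinearMap (LinearMap.mulLeft ℝ A)
      map_add' := fun A B => by ext v; simp [add_mul]
      map_smul' := fun c A => by ext v; simp [smul_mul_assoc] }

@[simp] theorem mulL_apply (A B : Matrix (Fin n) (Fin n) ℝ) : mulL n A B = A * B := by
  simp [mulL]

noncomputable def mulVecL (n : ℕ) :
    Matrix (Fin n) (Fin n) ℝ →L[ℝ] (Fin n → ℝ) →L[ℝ] (Fin n → ℝ) :=
  LinearMap.toContinuousLinearMap
    { toFun := fun A => LinearMap.toContinuousLinearMap (Matrix.mulVecLin A)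
      map_add' := fun A B => by ext v; simp [Matrix.add_mulVec]
      map_smul' := fun c A => by ext v; simp [Matrix.smul_mulVec] }

@[simp] theorem mulVecL_apply (A : Matrix (Fin n) (Fin n) ℝ) (v : Fin n → ℝ) :
    mulVecL n A v = A.mulVec v := by
  simp [mulVecL]

theorem hasDerivAt_matmul {A B : ℝ → Matrix (Fin n) (Fin n) ℝ} {t : ℝ}
    (hA : Differentiable ℝ A) (hB : Differentiable ℝ B) :
    HasDerivAt (fun s => A s * B s) (deriv A t * B t + A t * deriv B t) t := by
  have h := HasDerivAt.bilin (mulL n) (hA t).hasDerivAt (hB t).hasDerivAt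
  exact h

theorem hasDerivAt_mulVec {A : ℝ → Matrix (Fin n) (Fin n) ℝ} {g : ℝ → Fin n → ℝ} {t : ℝ}
    (hA : Differentiable ℝ A) (hg : Differentiable ℝ g) :
    HasDerivAt (fun s => (A s).mulVec (g s))
      ((deriv A t).mulVec (g t) + (A t).mulVec (deriv g t)) t := by
  have h := HasDerivAt.bilin (mulVecL n) (hA t).hasDerivAt (hg t).hasDerivAt
  exact h

theorem deriv_brktM {A B : ℝ → Matrix (Fin n) (Fin n) ℝ}
    (hA : ContDiff ℝ (⊤ : ℕ∞) A) (hB : ContDiff ℝ (⊤ : ℕ∞) B) (α β t : ℝ) :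
    deriv (fun s => A s * B s - B s * A s + β • deriv A s - α • deriv B s) t =
      (deriv A t * B t + A t * deriv B t) - (deriv B t * A t + B t * deriv A t)
        + β • deriv (deriv A) t - α • deriv (deriv B) t := by
  have dA : Differentiable ℝ A := hA.differentiable (by simp)
  have dB : Differentiable ℝ B := hB.differentiable (by simp)
  have ddA : Differentiable ℝ (deriv A) := (contDiff_infty_iff_deriv.mp (hA.of_le (by simp))).2.differentiable (by norm_num)
  have ddB : Differentiable ℝ (deriv B) := (contDiff_infty_iff_deriv.mp (hB.of_le (by simp))).2.differentiable (by norm_num)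
  exact ((((hasDerivAt_matmul dA dB).sub (hasDerivAt_matmul dB dA)).add
    ((ddA t).hasDerivAt.const_smul β)).sub ((ddB t).hasDerivAt.const_smul α)).deriv

theorem deriv_brktV {A B : ℝ → Matrix (Fin n) (Fin n) ℝ} {f g : ℝ → Fin n → ℝ}
    (hA : ContDiff ℝ (⊤ : ℕ∞) A) (hB : ContDiff ℝ (⊤ : ℕ∞) B)
    (hf : ContDiff ℝ (⊤ : ℕ∞) f) (hg : ContDiff ℝ (⊤ : ℕ∞) g) (α β t : ℝ) :
    deriv (fun s => (A s).mulVec (g s) - (B s).mulVec (f s) + β • deriv f s - α • deriv g s) t =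
      ((deriv A t).mulVec (g t) + (A t).mulVec (deriv g t))
        - ((deriv B t).mulVec (f t) + (B t).mulVec (deriv f t))
        + β • deriv (deriv f) t - α • deriv (deriv g) t := by
  have dA : Differentiable ℝ A := hA.differentiable (by simp)
  have dB : Differentiable ℝ B := hB.differentiable (by simp)
  have df : Differentiable ℝ f := hf.differentiable (by simp)
  have dg : Differentiable ℝ g := hg.differentiable (by simp)
  have ddf : Differentiable ℝ (deriv f) := (contDiff_infty_iff_deriv.mp (hf.of_le (by simp))).2.differentiable (by norm_num)
  have ddg : Differentiable ℝ (deriv g) := (contDiff_infty_iff_deriv.mp (hg.of_le (by simp))).2.differentiable (by norm_num)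
  exact ((((hasDerivAt_mulVec dA dg).sub (hasDerivAt_mulVec dB df)).add
    ((ddf t).hasDerivAt.const_smul β)).sub ((ddg t).hasDerivAt.const_smul α)).deriv

end helpers

/-- on smooth triples, the bracket `[·,·]_𝔩` is bilinear,
antisymmetric, and satisfies the Jacobi identity. -/
theorem lbracket_bilinear_antisymm_jacobi (n : ℕ) :
    (∀ (X Y Z : Triple n), X.Smooth → Y.Smooth → Z.Smooth → ∀ a b : ℝ,
        lbracket (a • X + b • Y) Z = a • lbracket X Z + b • lbracket Y Z ∧
        lbracket X (a • Y + b • Z) = a • lbracket X Y + b • lbracket X Z) ∧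
    (∀ (X Y : Triple n), X.Smooth → Y.Smooth →
        lbracket X Y = - lbracket Y X) ∧
    (∀ (X Y Z : Triple n), X.Smooth → Y.Smooth → Z.Smooth →
        lbracket X (lbracket Y Z) + lbracket Y (lbracket Z X)
          + lbracket Z (lbracket X Y) = 0) := by
  refine ⟨?_, ?_, ?_⟩
  · rintro ⟨A, f, α⟩ ⟨B, g, β⟩ ⟨C, h, γ⟩ ⟨hA, hf⟩ ⟨hB, hg⟩ ⟨hC, hh⟩ a b
    replace hA : ContDiff ℝ (⊤ : ℕ∞) A := hA
    replace hB : ContDiff ℝ (⊤ : ℕ∞) B := hB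
    replace hC : ContDiff ℝ (⊤ : ℕ∞) C := hC
    replace hf : ContDiff ℝ (⊤ : ℕ∞) f := hf
    replace hg : ContDiff ℝ (⊤ : ℕ∞) g := hg
    replace hh : ContDiff ℝ (⊤ : ℕ∞) h := hh
    have dA : Differentiable ℝ A := hA.differentiable (by simp)
    have dB : Differentiable ℝ B := hB.differentiable (by simp)
    have dC : Differentiable ℝ C := hC.differentiable (by simp)
    have df : Differentiable ℝ f := hf.differentiable (by simp)
    have dg : Differentiable ℝ g := hg.differentiable (by simp)
    have dh : Differentiable ℝ h := hh.differentiable (by simp)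
    constructor
    · refine Prod.ext (funext fun t => ?_) (Prod.ext (funext fun t => ?_) ?_)
      · simp only [lbracket, Prod.fst_add, Prod.snd_add, Prod.smul_fst, Prod.smul_snd,
          Pi.add_apply, Pi.smul_apply, smul_eq_mul, (show deriv (a • A + b • B) t = a • deriv A t + b • deriv B t from deriv_comb dA dB a b t)]
        simp only [add_mul, mul_add, smul_mul_assoc, mul_smul_comm, smul_add, smul_sub, smul_smul]
        module
      · simp only [lbracket, Prod.fst_add, Prod.snd_add, Prod.smul_fst, Prod.smul_snd,
          Pi.add_apply, Pi.smul_apply, smul_eq_mul, deriv_comb df dg a b t]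
        simp only [Matrix.add_mulVec, Matrix.mulVec_add, Matrix.smul_mulVec,
          Matrix.mulVec_smul, smul_add, smul_sub, smul_smul]
        module
      · simp [lbracket]
    · refine Prod.ext (funext fun t => ?_) (Prod.ext (funext fun t => ?_) ?_)
      · simp only [lbracket, Prod.fst_add, Prod.snd_add, Prod.smul_fst, Prod.smul_snd,
          Pi.add_apply, Pi.smul_apply, smul_eq_mul, (show deriv (a • B + b • C) t = a • deriv B t + b • deriv C t from deriv_comb dB dC a b t)]
        simp only [add_mul, mul_add, smul_mul_assoc, mul_smul_comm, smul_add, smul_sub, smul_smul]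
        module
      · simp only [lbracket, Prod.fst_add, Prod.snd_add, Prod.smul_fst, Prod.smul_snd,
          Pi.add_apply, Pi.smul_apply, smul_eq_mul, deriv_comb dg dh a b t]
        simp only [Matrix.add_mulVec, Matrix.mulVec_add, Matrix.smul_mulVec,
          Matrix.mulVec_smul, smul_add, smul_sub, smul_smul]
        module
      · simp [lbracket]
  · rintro ⟨A, f, α⟩ ⟨B, g, β⟩ - -
    refine Prod.ext (funext fun t => ?_) (Prod.ext (funext fun t => ?_) ?_)
    · simp only [lbracket, Prod.fst_neg, Prod.snd_neg, Pi.neg_apply]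
      module
    · simp only [lbracket, Prod.fst_neg, Prod.snd_neg, Pi.neg_apply]
      module
    · simp [lbracket]
  · rintro ⟨A, f, α⟩ ⟨B, g, β⟩ ⟨C, h, γ⟩ ⟨hA, hf⟩ ⟨hB, hg⟩ ⟨hC, hh⟩
    replace hA : ContDiff ℝ (⊤ : ℕ∞) A := hA
    replace hB : ContDiff ℝ (⊤ : ℕ∞) B := hB
    replace hC : ContDiff ℝ (⊤ : ℕ∞) C := hC
    replace hf : ContDiff ℝ (⊤ : ℕ∞) f := hf
    replace hg : ContDiff ℝ (⊤ : ℕ∞) g := hg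
    replace hh : ContDiff ℝ (⊤ : ℕ∞) h := hh
    refine Prod.ext (funext fun t => ?_) (Prod.ext (funext fun t => ?_) ?_)
    · simp only [lbracket, Prod.fst_add, Pi.add_apply, Prod.fst_zero, Pi.zero_apply,
        zero_smul]
      rw [deriv_brktM hB hC β γ t, deriv_brktM hC hA γ α t, deriv_brktM hA hB α β t]
      simp only [mul_sub, sub_mul, mul_add, add_mul, mul_smul_comm, smul_mul_assoc,
        smul_add, smul_sub, smul_smul, mul_assoc]
      module
    · simp only [lbracket, Prod.snd_add, Prod.fst_add, Pi.add_apply, Prod.snd_zero,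
        Prod.fst_zero, Pi.zero_apply, zero_smul]
      rw [deriv_brktV hB hC hg hh β γ t, deriv_brktV hC hA hh hf γ α t,
        deriv_brktV hA hB hf hg α β t]
      simp only [Matrix.sub_mulVec, Matrix.add_mulVec, Matrix.mulVec_sub, Matrix.mulVec_add,
        Matrix.smul_mulVec, Matrix.mulVec_smul, smul_add, smul_sub, smul_smul,
        Matrix.mulVec_mulVec]
      module
    · simp only [lbracket, Prod.snd_add, Prod.snd_zero]
      norm_num
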